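/- Let H be a linearly orderable monoid. Then the power monoid P_fin(H) is a BF-monoid if and only if H is a BF-monoid. -/

import Mathlib

open Pointwise

/-- `a` is an atom of a monoid: it is not a unit and cannot be written as a product
of two non-units. -/
def IsAtomIn {H : Type*} [Monoid H] (a : H) : Prop :=
  ¬ IsUnit a ∧ ∀ x y : H, a = x * y → IsUnit x ∨ IsUnit y

/-- `A` is an atom of the power monoid `P_fin(H)`. -/
def IsAtomPfin {H : Type*} [Monoid H] [DecidableEq H] (A : Finset H) : Prop :=
  A.Nonempty ∧ ¬ IsUnit A ∧
    ∀ X Y : Finset H, X.Nonempty → Y.Nonempty → A = X * Y → IsUnit X ∨ IsUnit Y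


set_option linter.unusedSectionVars false
section
variable {H : Type*} [Monoid H] [LinearOrder H] [DecidableEq H]

theorem pm_mul_le_mul_right (hr : ∀ x y z : H, x < y → x * z < y * z)
    {x y : H} (h : x ≤ y) (z : H) : x * z ≤ y * z := by
  rcases h.lt_or_eq with h | h
  · exact (hr _ _ _ h).le
  · rw [h]

theorem pm_mul_le_mul_left (hl : ∀ x y z : H, x < y → z * x < z * y)
    {x y : H} (h : x ≤ y) (z : H) : z * x ≤ z * y := by
  rcases h.lt_or_eq with h | h
  · exact (hl _ _ _ h).le
  · rw [h]

theorem pm_left_cancel (hl : ∀ x y z : H, x < y → z * x < z * y)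
    {z x y : H} (h : z * x = z * y) : x = y := by
  rcases lt_trichotomy x y with h' | h' | h'
  · exact absurd h (hl x y z h').ne
  · exact h'
  · exact absurd h.symm (hl y x z h').ne

theorem pm_right_cancel (hr : ∀ x y z : H, x < y → x * z < y * z)
    {z x y : H} (h : x * z = y * z) : x = y := by
  rcases lt_trichotomy x y with h' | h' | h'
  · exact absurd h (hr x y z h').ne
  · exact h'
  · exact absurd h.symm (hr y x z h').ne

theorem pm_mul_eq_one (hl : ∀ x y z : H, x < y → z * x < z * y)
    {x y : H} (h : x * y = 1) : IsUnit x ∧ IsUnit y := by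
  have hyx : y * x = 1 := by
    have h2 : (y * x) * (y * x) = (y * x) * 1 := by
      rw [mul_assoc y x (y*x), ← mul_assoc x y x, h, one_mul, mul_one]
    exact pm_left_cancel hl h2
  exact ⟨⟨⟨x, y, h, hyx⟩, rfl⟩, ⟨⟨y, x, hyx, h⟩, rfl⟩⟩

theorem pm_isUnit_mul (hl : ∀ x y z : H, x < y → z * x < z * y)
    {x y : H} (h : IsUnit (x * y)) : IsUnit x ∧ IsUnit y := by
  obtain ⟨u, hu⟩ := h
  have h1 : x * (y * ↑u⁻¹) = 1 := by rw [← mul_assoc, ← hu]; exact u.mul_inv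
  obtain ⟨hx, hyu⟩ := pm_mul_eq_one hl h1
  refine ⟨hx, ?_⟩
  have : y = (y * ↑u⁻¹) * ↑u := by rw [mul_assoc, u.inv_mul, mul_one]
  rw [this]
  exact hyu.mul u.isUnit

end

section
variable {H : Type*} [Monoid H] [LinearOrder H] [DecidableEq H]

theorem pm_card_le_mul_left (hr : ∀ x y z : H, x < y → x * z < y * z)
    {X Y : Finset H} (hY : Y.Nonempty) : X.card ≤ (X * Y).card := by
  obtain ⟨y, hy⟩ := hY
  have hinj : Function.Injective (· * y) := fun a b h => pm_right_cancel hr h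
  calc X.card = (X.image (· * y)).card := (Finset.card_image_of_injective _ hinj).symm
    _ ≤ (X * Y).card := by
        apply Finset.card_le_card
        intro a ha
        rw [Finset.mem_image] at ha
        obtain ⟨x, hx, rfl⟩ := ha
        exact Finset.mul_mem_mul hx hy

theorem pm_card_le_mul_right (hl : ∀ x y z : H, x < y → z * x < z * y)
    {X Y : Finset H} (hX : X.Nonempty) : Y.card ≤ (X * Y).card := by
  obtain ⟨x, hx⟩ := hX
  have hinj : Function.Injective (x * ·) := fun a b h => pm_left_cancel hl h
  calc Y.card = (Y.image (x * ·)).card := (Finset.card_image_of_injective _ hinj).symm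
    _ ≤ (X * Y).card := by
        apply Finset.card_le_card
        intro a ha
        rw [Finset.mem_image] at ha
        obtain ⟨y, hy, rfl⟩ := ha
        exact Finset.mul_mem_mul hx hy

theorem pm_card_mul (hr : ∀ x y z : H, x < y → x * z < y * z)
    (hl : ∀ x y z : H, x < y → z * x < z * y)
    {X Y : Finset H} (hX : X.Nonempty) (hY : Y.Nonempty) :
    X.card + Y.card ≤ (X * Y).card + 1 := by
  set m := X.min' hX with hm
  set M := Y.max' hY with hM
  set A := X.image (· * M) with hA
  set B := Y.image (m * ·) with hB
  have hinjA : Function.Injective (· * M) := fun a b h => pm_right_cancel hr h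
  have hinjB : Function.Injective (m * ·) := fun a b h => pm_left_cancel hl h
  have hAcard : A.card = X.card := Finset.card_image_of_injective _ hinjA
  have hBcard : B.card = Y.card := Finset.card_image_of_injective _ hinjB
  have hsub : A ∪ B ⊆ X * Y := by
    intro a ha
    rw [Finset.mem_union] at ha
    rcases ha with ha | ha
    · rw [hA, Finset.mem_image] at ha
      obtain ⟨x, hx, rfl⟩ := ha
      exact Finset.mul_mem_mul hx (Y.max'_mem hY)
    · rw [hB, Finset.mem_image] at ha
      obtain ⟨y, hy, rfl⟩ := ha
      exact Finset.mul_mem_mul (X.min'_mem hX) hy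
  have hinter : A ∩ B ⊆ {m * M} := by
    intro a ha
    rw [Finset.mem_inter] at ha
    obtain ⟨ha1, ha2⟩ := ha
    rw [hA, Finset.mem_image] at ha1
    rw [hB, Finset.mem_image] at ha2
    obtain ⟨x, hx, rfl⟩ := ha1
    obtain ⟨y, hy, hxy⟩ := ha2
    have h1 : m * M ≤ x * M := pm_mul_le_mul_right hr (X.min'_le x hx) M
    have h2 : m * y ≤ m * M := pm_mul_le_mul_left hl (Y.le_max' y hy) m
    rw [hxy] at h2
    have : x * M = m * M := le_antisymm h2 h1
    rw [Finset.mem_singleton, this]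
  have key : (A ∪ B).card + (A ∩ B).card = A.card + B.card :=
    Finset.card_union_add_card_inter A B
  have h1 : (A ∪ B).card ≤ (X * Y).card := Finset.card_le_card hsub
  have h2 : (A ∩ B).card ≤ 1 := by
    calc (A ∩ B).card ≤ ({m * M} : Finset H).card := Finset.card_le_card hinter
      _ = 1 := Finset.card_singleton _
  omega

theorem pm_min'_mul (hr : ∀ x y z : H, x < y → x * z < y * z)
    (hl : ∀ x y z : H, x < y → z * x < z * y)
    {X Y : Finset H} (hX : X.Nonempty) (hY : Y.Nonempty) :
    (X * Y).min' (hX.mul hY) = X.min' hX * Y.min' hY := by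
  apply le_antisymm
  · exact Finset.min'_le _ _ (Finset.mul_mem_mul (X.min'_mem hX) (Y.min'_mem hY))
  · apply Finset.le_min'
    intro z hz
    rw [Finset.mem_mul] at hz
    obtain ⟨x, hx, y, hy, rfl⟩ := hz
    calc X.min' hX * Y.min' hY ≤ x * Y.min' hY :=
          pm_mul_le_mul_right hr (X.min'_le x hx) _
      _ ≤ x * y := pm_mul_le_mul_left hl (Y.min'_le y hy) x

theorem pm_unit_iff (hr : ∀ x y z : H, x < y → x * z < y * z)
    (hl : ∀ x y z : H, x < y → z * x < z * y)
    {X : Finset H} : IsUnit X ↔ ∃ x, IsUnit x ∧ X = {x} := by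
  constructor
  · rintro ⟨u, hu⟩
    have h1 : X * (↑u⁻¹ : Finset H) = 1 := by rw [← hu]; exact u.mul_inv
    have hYne : (↑u⁻¹ : Finset H).Nonempty := by
      by_contra h
      rw [Finset.not_nonempty_iff_eq_empty] at h
      rw [h, Finset.mul_empty] at h1
      have : (1:H) ∈ (1 : Finset H) := Finset.mem_one.2 rfl
      rw [← h1] at this
      exact absurd this (Finset.notMem_empty _)
    have hcard : X.card ≤ 1 := by
      have := pm_card_le_mul_left hr (X := X) hYne
      rw [h1] at this
      simpa using this
    have hXne : X.Nonempty := by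
      by_contra h
      rw [Finset.not_nonempty_iff_eq_empty] at h
      rw [h, Finset.empty_mul] at h1
      have : (1:H) ∈ (1 : Finset H) := Finset.mem_one.2 rfl
      rw [← h1] at this
      exact absurd this (Finset.notMem_empty _)
    have : X.card = 1 := le_antisymm hcard (Finset.card_pos.2 hXne)
    obtain ⟨x, hx⟩ := Finset.card_eq_one.1 this
    refine ⟨x, ?_, hx⟩
    obtain ⟨y, hy⟩ := hYne
    have hmem : x * y ∈ X * (↑u⁻¹ : Finset H) :=
      Finset.mul_mem_mul (hx ▸ Finset.mem_singleton_self x) hy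
    rw [h1, Finset.mem_one] at hmem
    exact (pm_mul_eq_one hl hmem).1
  · rintro ⟨x, hx, rfl⟩
    exact hx.map Finset.singletonMonoidHom

theorem pm_unit_singleton (hr : ∀ x y z : H, x < y → x * z < y * z)
    (hl : ∀ x y z : H, x < y → z * x < z * y)
    {x : H} : IsUnit ({x} : Finset H) ↔ IsUnit x := by
  rw [pm_unit_iff hr hl]
  constructor
  · rintro ⟨y, hy, h⟩
    rw [Finset.singleton_inj] at h
    rwa [h]
  · intro h
    exact ⟨x, h, rfl⟩

theorem pm_eq_singleton_of_mul (hr : ∀ x y z : H, x < y → x * z < y * z)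
    (hl : ∀ x y z : H, x < y → z * x < z * y)
    {X Y : Finset H} {a : H} (hX : X.Nonempty) (hY : Y.Nonempty)
    (h : X * Y = {a}) : ∃ x y, X = {x} ∧ Y = {y} ∧ x * y = a := by
  have hc : (X * Y).card = 1 := by rw [h]; exact Finset.card_singleton a
  have h1 : X.card + Y.card ≤ 2 := by
    have := pm_card_mul hr hl hX hY
    omega
  have hX1 : X.card = 1 := by
    have := Finset.card_pos.2 hX
    have := Finset.card_pos.2 hY
    omega
  have hY1 : Y.card = 1 := by
    have := Finset.card_pos.2 hX
    have := Finset.card_pos.2 hY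
    omega
  obtain ⟨x, rfl⟩ := Finset.card_eq_one.1 hX1
  obtain ⟨y, rfl⟩ := Finset.card_eq_one.1 hY1
  refine ⟨x, y, rfl, rfl, ?_⟩
  have : x * y ∈ ({x} : Finset H) * {y} :=
    Finset.mul_mem_mul (Finset.mem_singleton_self x) (Finset.mem_singleton_self y)
  rw [h, Finset.mem_singleton] at this
  exact this

theorem pm_atom_singleton (hr : ∀ x y z : H, x < y → x * z < y * z)
    (hl : ∀ x y z : H, x < y → z * x < z * y)
    {a : H} : IsAtomPfin ({a} : Finset H) ↔ IsAtomIn a := by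
  constructor
  · rintro ⟨-, hu, hd⟩
    refine ⟨fun h => hu ((pm_unit_singleton hr hl).2 h), fun x y h => ?_⟩
    have := hd {x} {y} (Finset.singleton_nonempty x) (Finset.singleton_nonempty y)
      (by rw [Finset.singleton_mul_singleton, h])
    rcases this with h' | h'
    · exact Or.inl ((pm_unit_singleton hr hl).1 h')
    · exact Or.inr ((pm_unit_singleton hr hl).1 h')
  · rintro ⟨hu, hd⟩
    refine ⟨Finset.singleton_nonempty a, fun h => hu ((pm_unit_singleton hr hl).1 h),
      fun X Y hX hY h => ?_⟩
    obtain ⟨x, y, rfl, rfl, hxy⟩ := pm_eq_singleton_of_mul hr hl hX hY h.symm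
    rcases hd x y hxy.symm with h' | h'
    · exact Or.inl ((pm_unit_singleton hr hl).2 h')
    · exact Or.inr ((pm_unit_singleton hr hl).2 h')

theorem pm_prod_nonempty (l : List (Finset H)) (h : ∀ A ∈ l, A.Nonempty) :
    l.prod.Nonempty := by
  induction l with
  | nil => exact ⟨1, Finset.mem_one.2 rfl⟩
  | cons A t ih =>
    rw [List.prod_cons]
    exact (h A (List.mem_cons_self)).mul (ih fun B hB => h B (List.mem_cons_of_mem A hB))

end

section
variable {H : Type*} [Monoid H]

theorem mon_atom_mul_unit {a u : H} (ha : IsAtomIn a) (hu : IsUnit u) :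
    IsAtomIn (a * u) := by
  obtain ⟨v, rfl⟩ := hu
  constructor
  · intro h
    apply ha.1
    have : a = (a * ↑v) * ↑v⁻¹ := by rw [mul_assoc, v.mul_inv, mul_one]
    rw [this]
    exact h.mul v⁻¹.isUnit
  · intro x y h
    have h2 : a = x * (y * ↑v⁻¹) := by
      rw [← mul_assoc, ← h, mul_assoc, v.mul_inv, mul_one]
    rcases ha.2 x (y * ↑v⁻¹) h2 with h' | h'
    · exact Or.inl h'
    · refine Or.inr ?_
      have : y = (y * ↑v⁻¹) * ↑v := by rw [mul_assoc, v.inv_mul, mul_one]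
      rw [this]
      exact h'.mul v.isUnit

theorem mon_unit_mul_atom {a u : H} (hu : IsUnit u) (ha : IsAtomIn a) :
    IsAtomIn (u * a) := by
  obtain ⟨v, rfl⟩ := hu
  constructor
  · intro h
    apply ha.1
    have : a = ↑v⁻¹ * (↑v * a) := by rw [← mul_assoc, v.inv_mul, one_mul]
    rw [this]
    exact v⁻¹.isUnit.mul h
  · intro x y h
    have h2 : a = (↑v⁻¹ * x) * y := by
      rw [mul_assoc, ← h, ← mul_assoc, v.inv_mul, one_mul]
    rcases ha.2 (↑v⁻¹ * x) y h2 with h' | h'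
    · refine Or.inl ?_
      have : x = ↑v * (↑v⁻¹ * x) := by rw [← mul_assoc, v.mul_inv, one_mul]
      rw [this]
      exact v.isUnit.mul h'
    · exact Or.inr h'

end

section
variable {H : Type*} [Monoid H] [LinearOrder H] [DecidableEq H]

/-- Weight on finite sets built from a weight `lam` on `H`. -/
noncomputable def PLam (lam : H → ℕ) (X : Finset H) : ℕ :=
  X.card - 1 + (if h : X.Nonempty then lam (X.min' h) else 0)

theorem PLam_superadd (hr : ∀ x y z : H, x < y → x * z < y * z)
    (hl : ∀ x y z : H, x < y → z * x < z * y)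
    (lam : H → ℕ) (h2 : ∀ x y : H, lam x + lam y ≤ lam (x * y))
    {X Y : Finset H} (hX : X.Nonempty) (hY : Y.Nonempty) :
    PLam lam X + PLam lam Y ≤ PLam lam (X * Y) := by
  have hXY : (X * Y).Nonempty := hX.mul hY
  have hc : X.card + Y.card ≤ (X * Y).card + 1 := pm_card_mul hr hl hX hY
  have hcX : 1 ≤ X.card := Finset.card_pos.2 hX
  have hcY : 1 ≤ Y.card := Finset.card_pos.2 hY
  have hmin : lam (X.min' hX) + lam (Y.min' hY) ≤ lam ((X * Y).min' hXY) := by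
    rw [pm_min'_mul hr hl hX hY]
    exact h2 _ _
  unfold PLam
  rw [dif_pos hX, dif_pos hY, dif_pos hXY]
  omega

theorem PLam_pos (hr : ∀ x y z : H, x < y → x * z < y * z)
    (hl : ∀ x y z : H, x < y → z * x < z * y)
    (lam : H → ℕ) (h1 : ∀ x : H, ¬ IsUnit x → 1 ≤ lam x)
    {X : Finset H} (hX : X.Nonempty) (hu : ¬ IsUnit X) : 1 ≤ PLam lam X := by
  unfold PLam
  rw [dif_pos hX]
  rcases Nat.lt_or_ge X.card 2 with h | h
  · have hc : X.card = 1 := le_antisymm (by omega) (Finset.card_pos.2 hX)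
    obtain ⟨x, hx⟩ := Finset.card_eq_one.1 hc
    subst hx
    have hxu : ¬ IsUnit x := fun h' => hu ((pm_unit_singleton hr hl).2 h')
    rw [Finset.min'_singleton]
    have := h1 x hxu
    omega
  · omega

theorem pfin_exists (hr : ∀ x y z : H, x < y → x * z < y * z)
    (hl : ∀ x y z : H, x < y → z * x < z * y)
    (lam : H → ℕ) (h1 : ∀ x : H, ¬ IsUnit x → 1 ≤ lam x)
    (h2 : ∀ x y : H, lam x + lam y ≤ lam (x * y)) :
    ∀ (n : ℕ) (X : Finset H), PLam lam X ≤ n → X.Nonempty → ¬ IsUnit X →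
      ∃ l : List (Finset H), (∀ A ∈ l, IsAtomPfin A) ∧ l.prod = X := by
  intro n
  induction n with
  | zero =>
    intro X hle hX hu
    exact absurd hle (by have := PLam_pos hr hl lam h1 hX hu; omega)
  | succ n ih =>
    intro X hle hX hu
    by_cases hA : IsAtomPfin X
    · exact ⟨[X], by simp [hA], by simp⟩
    · have : ∃ Y Z : Finset H, Y.Nonempty ∧ Z.Nonempty ∧ X = Y * Z ∧
          ¬ IsUnit Y ∧ ¬ IsUnit Z := by
        unfold IsAtomPfin at hA
        push_neg at hA
        obtain ⟨Y, Z, hY, hZ, he, hYu, hZu⟩ := hA hX hu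
        exact ⟨Y, Z, hY, hZ, he, hYu, hZu⟩
      obtain ⟨Y, Z, hY, hZ, rfl, hYu, hZu⟩ := this
      have hsup := PLam_superadd hr hl lam h2 hY hZ
      have hYp := PLam_pos hr hl lam h1 hY hYu
      have hZp := PLam_pos hr hl lam h1 hZ hZu
      obtain ⟨lY, hlY, hlYp⟩ := ih Y (by omega) hY hYu
      obtain ⟨lZ, hlZ, hlZp⟩ := ih Z (by omega) hZ hZu
      refine ⟨lY ++ lZ, fun A hA' => ?_, by rw [List.prod_append, hlYp, hlZp]⟩
      rcases List.mem_append.1 hA' with h | h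
      · exact hlY A h
      · exact hlZ A h

theorem pfin_len (hr : ∀ x y z : H, x < y → x * z < y * z)
    (hl : ∀ x y z : H, x < y → z * x < z * y)
    (lam : H → ℕ) (h1 : ∀ x : H, ¬ IsUnit x → 1 ≤ lam x)
    (h2 : ∀ x y : H, lam x + lam y ≤ lam (x * y)) :
    ∀ l : List (Finset H), (∀ A ∈ l, IsAtomPfin A) →
      l.length ≤ PLam lam l.prod := by
  intro l
  induction l with
  | nil => intro _; simp
  | cons A t ih =>
    intro h
    have hA := h A (List.mem_cons_self)
    have ht : ∀ B ∈ t, IsAtomPfin B := fun B hB => h B (List.mem_cons_of_mem A hB)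
    have htp : t.prod.Nonempty := pm_prod_nonempty t fun B hB => (ht B hB).1
    rw [List.prod_cons]
    have hsup := PLam_superadd hr hl lam h2 hA.1 htp
    have hAp := PLam_pos hr hl lam h1 hA.1 hA.2.1
    have := ih ht
    simp only [List.length_cons]
    omega

end

section
variable {H : Type*} [Monoid H]

open Classical in
/-- The maximal factorization length (0 for units). -/
noncomputable def HLam (x : H) : ℕ :=
  if IsUnit x then 0
  else sSup {k : ℕ | ∃ l : List H, l.length = k ∧ (∀ a ∈ l, IsAtomIn a) ∧ l.prod = x}

variable (hH : ∀ x : H, ¬ IsUnit x →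
      (∃ l : List H, (∀ a ∈ l, IsAtomIn a) ∧ l.prod = x) ∧
      {k : ℕ | ∃ l : List H,
        l.length = k ∧ (∀ a ∈ l, IsAtomIn a) ∧ l.prod = x}.Finite)

include hH

theorem HLam_mem {x : H} (hx : ¬ IsUnit x) :
    ∃ l : List H, l.length = HLam x ∧ (∀ a ∈ l, IsAtomIn a) ∧ l.prod = x := by
  have hne : {k : ℕ | ∃ l : List H,
      l.length = k ∧ (∀ a ∈ l, IsAtomIn a) ∧ l.prod = x}.Nonempty := by
    obtain ⟨l, hla, hlp⟩ := (hH x hx).1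
    exact ⟨l.length, l, rfl, hla, hlp⟩
  have hmem := Nat.sSup_mem hne ((hH x hx).2.bddAbove)
  rw [Set.mem_setOf_eq] at hmem
  unfold HLam
  rw [if_neg hx]
  exact hmem

theorem HLam_le {x : H} (hx : ¬ IsUnit x) {k : ℕ}
    (hk : ∃ l : List H, l.length = k ∧ (∀ a ∈ l, IsAtomIn a) ∧ l.prod = x) :
    k ≤ HLam x := by
  unfold HLam
  rw [if_neg hx]
  exact le_csSup ((hH x hx).2.bddAbove) hk

theorem HLam_pos {x : H} (hx : ¬ IsUnit x) : 1 ≤ HLam x := by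
  obtain ⟨l, hlen, hla, hlp⟩ := HLam_mem hH hx
  rcases l with _ | ⟨a, t⟩
  · rw [List.prod_nil] at hlp
    exact absurd (hlp ▸ isUnit_one) hx
  · rw [← hlen]
    simp

end

section
variable {H : Type*} [Monoid H] [LinearOrder H] [DecidableEq H]

theorem HLam_superadd (hl : ∀ x y z : H, x < y → z * x < z * y)
    (hH : ∀ x : H, ¬ IsUnit x →
      (∃ l : List H, (∀ a ∈ l, IsAtomIn a) ∧ l.prod = x) ∧
      {k : ℕ | ∃ l : List H,
        l.length = k ∧ (∀ a ∈ l, IsAtomIn a) ∧ l.prod = x}.Finite) :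
    ∀ x y : H, HLam x + HLam y ≤ HLam (x * y) := by
  intro x y
  by_cases hx : IsUnit x
  · by_cases hy : IsUnit y
    · simp [HLam, hx, hy]
    · have hxy : ¬ IsUnit (x * y) := fun h => hy (pm_isUnit_mul hl h).2
      have hx0 : HLam x = 0 := by simp [HLam, hx]
      rw [hx0, zero_add]
      obtain ⟨l, hlen, hla, hlp⟩ := HLam_mem hH hy
      rcases l with _ | ⟨a, t⟩
      · rw [← hlen]; exact Nat.zero_le _
      · apply HLam_le hH hxy
        refine ⟨(x * a) :: t, by simpa using hlen, ?_, ?_⟩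
        · intro b hb
          rcases List.mem_cons.1 hb with rfl | hb
          · exact mon_unit_mul_atom hx (hla a (List.mem_cons_self))
          · exact hla b (List.mem_cons_of_mem a hb)
        · rw [List.prod_cons, mul_assoc, ← List.prod_cons, hlp]
  · by_cases hy : IsUnit y
    · have hxy : ¬ IsUnit (x * y) := fun h => hx (pm_isUnit_mul hl h).1
      have hy0 : HLam y = 0 := by simp [HLam, hy]
      rw [hy0, add_zero]
      obtain ⟨l, hlen, hla, hlp⟩ := HLam_mem hH hx
      rcases List.eq_nil_or_concat l with rfl | ⟨t, a, rfl⟩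
      · rw [← hlen]; exact Nat.zero_le _
      · simp only [List.concat_eq_append] at hlen hla hlp
        apply HLam_le hH hxy
        refine ⟨t ++ [a * y], by simpa using hlen, ?_, ?_⟩
        · intro b hb
          rcases List.mem_append.1 hb with hb | hb
          · exact hla b (List.mem_append_left _ hb)
          · rw [List.mem_singleton] at hb
            subst hb
            exact mon_atom_mul_unit (hla a (List.mem_append_right _ (List.mem_singleton_self a))) hy
        · rw [List.prod_append, List.prod_singleton, ← mul_assoc, ← List.prod_singleton (x := a),
            ← List.prod_append, hlp]
    · have hxy : ¬ IsUnit (x * y) := fun h => hx (pm_isUnit_mul hl h).1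
      obtain ⟨lx, hlxn, hlxa, hlxp⟩ := HLam_mem hH hx
      obtain ⟨ly, hlyn, hlya, hlyp⟩ := HLam_mem hH hy
      apply HLam_le hH hxy
      refine ⟨lx ++ ly, by rw [List.length_append, hlxn, hlyn], ?_, ?_⟩
      · intro b hb
        rcases List.mem_append.1 hb with hb | hb
        · exact hlxa b hb
        · exact hlya b hb
      · rw [List.prod_append, hlxp, hlyp]

theorem pm_extract (hr : ∀ x y z : H, x < y → x * z < y * z)
    (hl : ∀ x y z : H, x < y → z * x < z * y) :
    ∀ (l : List (Finset H)) (x : H), (∀ A ∈ l, IsAtomPfin A) → l.prod = {x} →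
      ∃ m : List H, m.length = l.length ∧ (∀ a ∈ m, IsAtomIn a) ∧ m.prod = x := by
  intro l
  induction l with
  | nil =>
    intro x _ hp
    rw [List.prod_nil] at hp
    have h1 : (1 : H) ∈ (1 : Finset H) := Finset.mem_one.2 rfl
    rw [hp, Finset.mem_singleton] at h1
    exact ⟨[], rfl, by simp, by simp [← h1]⟩
  | cons A t ih =>
    intro x h hp
    rw [List.prod_cons] at hp
    have hA := h A (List.mem_cons_self)
    have ht : ∀ B ∈ t, IsAtomPfin B := fun B hB => h B (List.mem_cons_of_mem A hB)
    have htp : t.prod.Nonempty := pm_prod_nonempty t fun B hB => (ht B hB).1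
    obtain ⟨a, y, hAe, hte, hay⟩ := pm_eq_singleton_of_mul hr hl hA.1 htp hp
    obtain ⟨m, hml, hma, hmp⟩ := ih y ht hte
    refine ⟨a :: m, by simp [hml], ?_, by rw [List.prod_cons, hmp, hay]⟩
    intro b hb
    rcases List.mem_cons.1 hb with rfl | hb
    · exact (pm_atom_singleton hr hl).1 (hAe ▸ hA)
    · exact hma b hb

theorem pm_map_singleton_prod (m : List H) :
    (m.map fun a => ({a} : Finset H)).prod = {m.prod} := by
  induction m with
  | nil => rfl
  | cons a t ih =>
    rw [List.map_cons, List.prod_cons, ih, List.prod_cons, Finset.singleton_mul_singleton]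

end


/-- If `H` is a linearly orderable monoid, then the power monoid `P_fin(H)` is a
BF-monoid if and only if `H` is a BF-monoid. -/
theorem stmt_10 {H : Type*} [Monoid H] [LinearOrder H] [DecidableEq H]
    (hr : ∀ x y z : H, x < y → x * z < y * z)
    (hl : ∀ x y z : H, x < y → z * x < z * y) :
    (∀ X : Finset H, X.Nonempty → ¬ IsUnit X →
      (∃ l : List (Finset H), (∀ A ∈ l, IsAtomPfin A) ∧ l.prod = X) ∧
      {k : ℕ | ∃ l : List (Finset H),
        l.length = k ∧ (∀ A ∈ l, IsAtomPfin A) ∧ l.prod = X}.Finite) ↔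
    (∀ x : H, ¬ IsUnit x →
      (∃ l : List H, (∀ a ∈ l, IsAtomIn a) ∧ l.prod = x) ∧
      {k : ℕ | ∃ l : List H,
        l.length = k ∧ (∀ a ∈ l, IsAtomIn a) ∧ l.prod = x}.Finite) := by
  constructor
  · intro hP x hx
    have hxs : ¬ IsUnit ({x} : Finset H) := fun h => hx ((pm_unit_singleton hr hl).1 h)
    obtain ⟨⟨l, hla, hlp⟩, hfin⟩ := hP {x} (Finset.singleton_nonempty x) hxs
    constructor
    · obtain ⟨m, _, hma, hmp⟩ := pm_extract hr hl l x hla hlp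
      exact ⟨m, hma, hmp⟩
    · apply hfin.subset
      rintro k ⟨m, hml, hma, hmp⟩
      refine ⟨m.map fun a => ({a} : Finset H), by simpa using hml, ?_,
        by rw [pm_map_singleton_prod, hmp]⟩
      intro A hA
      rw [List.mem_map] at hA
      obtain ⟨a, ha, rfl⟩ := hA
      exact (pm_atom_singleton hr hl).2 (hma a ha)
  · intro hH X hX hXu
    have h1 : ∀ x : H, ¬ IsUnit x → 1 ≤ HLam x := fun x hx => HLam_pos hH hx
    have h2 : ∀ x y : H, HLam x + HLam y ≤ HLam (x * y) := HLam_superadd hl hH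
    constructor
    · exact pfin_exists hr hl HLam h1 h2 (PLam HLam X) X le_rfl hX hXu
    · apply (Set.finite_Iic (PLam HLam X)).subset
      rintro k ⟨l, hlen, hla, hlp⟩
      have := pfin_len hr hl HLam h1 h2 l hla
      rw [hlp] at this
      exact Set.mem_Iic.2 (hlen ▸ this)
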